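/- For all n ≥ 0 and k ≥ 0, the number of grand Dyck paths P ∈ 𝒢_n with ds(P) = k equals the number of bicolored grand Motzkin paths M of length n with h1⁰(M) + h2⁰(M) = k. -/

import Mathlib

/-- The height of the lattice path encoded by `w` (with `true = U`, `false = D`) after `j` steps. -/
def ht (w : List Bool) (j : ℕ) : ℤ :=
  ((w.take j).count true : ℤ) - ((w.take j).count false : ℤ)

/-- A grand Dyck path of semilength `n`. -/
def IsGrandDyck (n : ℕ) (w : List Bool) : Prop :=
  w.length = 2 * n ∧ w.count true = n

/-- The degree of symmetry of a grand Dyck path of semilength `n`: the number of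
`i ∈ {1,…,n}` such that `h_{i−1} = h_{2n+1−i}` and `h_i = h_{2n−i}`. -/
def dsGD (n : ℕ) (w : List Bool) : ℕ :=
  ((Finset.Icc 1 n).filter fun i =>
    ht w (i - 1) = ht w (2 * n + 1 - i) ∧ ht w i = ht w (2 * n - i)).card

/-- Steps of a bicolored grand Motzkin path. -/
inductive BStep : Type
  | U | D | H1 | H2
  deriving DecidableEq

/-- A bicolored grand Motzkin path: a word over {U,D,H1,H2} with equally many U's and D's. -/
def IsBicoloredGrandMotzkin (w : List BStep) : Prop :=
  w.count BStep.U = w.count BStep.D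

/-- The number of `H1` steps of `w` lying on the x-axis, i.e. whose starting height
(number of earlier U's minus earlier D's) is `0`. -/
def h1zero (w : List BStep) : ℕ :=
  ((Finset.range w.length).filter fun i =>
    w.getD i BStep.U = BStep.H1 ∧ (w.take i).count BStep.U = (w.take i).count BStep.D).card

/-- The number of `H2` steps of `w` lying on the x-axis. -/
def h2zero (w : List BStep) : ℕ :=
  ((Finset.range w.length).filter fun i =>
    w.getD i BStep.U = BStep.H2 ∧ (w.take i).count BStep.U = (w.take i).count BStep.D).card

/-!
Fold a grand Dyck path `p₁ ⋯ p₂ₙ` at its midpoint, pairing `pᵢ` with `p₂ₙ₊₁₋ᵢ`: the four possible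
pairs `(U,U)`, `(D,D)`, `(U,D)`, `(D,U)` become the steps `U`, `D`, `H1`, `H2` of a bicolored
Motzkin path of length `n`; this is a bijection between grand Dyck paths of semilength `n` and
bicolored grand Motzkin paths of length `n`. Since `h₂ₙ = 0`, one gets
`hⱼ - h₂ₙ₋ⱼ = 2 · (height of the folded path after j steps)` for `j ≤ n`, so the i-th step
is mirror-symmetric exactly when the folded path is on the x-axis both before and after its i-th
step, i.e. when that step is a horizontal step on the x-axis.
-/

namespace BStep

-- `x.front` is the step `pᵢ` and `x.back` the step `p₂ₙ₊₁₋ᵢ` that `x` encodes.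
def front : BStep → Bool
  | U => true | D => false | H1 => true | H2 => false

def back : BStep → Bool
  | U => true | D => false | H1 => false | H2 => true

def ofSteps : Bool → Bool → BStep
  | true, true => U | false, false => D | true, false => H1 | false, true => H2

def level : BStep → ℤ
  | U => 1 | D => -1 | H1 => 0 | H2 => 0

@[simp] lemma ofSteps_front_back (x : BStep) : ofSteps x.front x.back = x := by cases x <;> rfl

@[simp] lemma front_ofSteps (a b : Bool) : (ofSteps a b).front = a := by cases a <;> cases b <;> rfl

@[simp] lemma back_ofSteps (a b : Bool) : (ofSteps a b).back = b := by cases a <;> cases b <;> rfl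

end BStep

open BStep

lemma ht_append_of_le {l₁ l₂ : List Bool} {j : ℕ} (h : j ≤ l₁.length) :
    ht (l₁ ++ l₂) j = ht l₁ j := by
  rw [ht, ht, List.take_append_of_le_length h]

lemma ht_append_length_add (l₁ l₂ : List Bool) (j : ℕ) :
    ht (l₁ ++ l₂) (l₁.length + j) = ht l₁ l₁.length + ht l₂ j := by
  simp only [ht, List.take_length_add_append, List.take_length, List.count_append]
  push_cast
  ring

lemma ht_reverse (l : List Bool) (j : ℕ) :
    ht l.reverse j = ht l l.length - ht l (l.length - j) := by
  have hsplit := congrArg (fun l' => ((l'.count true : ℤ), (l'.count false : ℤ)))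
    (List.take_append_drop (l.length - j) l)
  simp only [List.count_append, Nat.cast_add, Prod.mk.injEq] at hsplit
  simp only [ht, List.take_reverse, List.count_reverse, List.take_length]
  omega

lemma ht_append_reverse (A B : List Bool) {j : ℕ} (hj : j ≤ B.length) :
    ht (A ++ B.reverse) (A.length + (B.length - j)) = ht A A.length + ht B B.length - ht B j := by
  rw [ht_append_length_add, ht_reverse, Nat.sub_sub_self hj]
  ring

lemma isGrandDyck_iff {n : ℕ} {w : List Bool} :
    IsGrandDyck n w ↔ w.length = 2 * n ∧ ht w w.length = 0 := by
  have := List.count_true_add_count_false w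
  simp only [IsGrandDyck, ht, List.take_length]
  omega

def motzkinHt (m : List BStep) (j : ℕ) : ℤ :=
  ((m.take j).count U : ℤ) - ((m.take j).count D : ℤ)

lemma motzkinHt_eq_zero_iff {m : List BStep} {j : ℕ} :
    motzkinHt m j = 0 ↔ (m.take j).count U = (m.take j).count D := by
  rw [motzkinHt, sub_eq_zero, Nat.cast_inj]

lemma motzkinHt_succ {m : List BStep} {j : ℕ} (hj : j < m.length) :
    motzkinHt m (j + 1) = motzkinHt m j + (m.getD j U).level := by
  rw [motzkinHt, motzkinHt, List.take_add_one, List.getElem?_eq_getElem hj,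
    List.getD_eq_getElem _ _ hj]
  cases m[j] <;> simp [level] <;> ring

lemma isBicoloredGrandMotzkin_iff {m : List BStep} :
    IsBicoloredGrandMotzkin m ↔ motzkinHt m m.length = 0 := by
  simp only [IsBicoloredGrandMotzkin, motzkinHt, List.take_length]
  omega

lemma ht_map_front_add_ht_map_back (m : List BStep) (j : ℕ) :
    ht (m.map front) j + ht (m.map back) j = 2 * motzkinHt m j := by
  simp only [ht, motzkinHt, ← List.map_take]
  induction m.take j with
  | nil => simp
  | cons x l ih => cases x <;> simp [front, back] <;> omega

def toGrandDyck (m : List BStep) : List Bool :=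
  m.map front ++ (m.map back).reverse

def ofGrandDyck (w : List Bool) : List BStep :=
  List.zipWith ofSteps (w.take (w.length / 2)) (w.drop (w.length / 2)).reverse

lemma length_toGrandDyck (m : List BStep) : (toGrandDyck m).length = 2 * m.length := by
  simp [toGrandDyck]; ring

lemma ofGrandDyck_toGrandDyck (m : List BStep) : ofGrandDyck (toGrandDyck m) = m := by
  have hhalf : (toGrandDyck m).length / 2 = m.length := by rw [length_toGrandDyck]; omega
  rw [ofGrandDyck, hhalf, toGrandDyck, List.take_left' (by simp), List.drop_left' (by simp),
    List.reverse_reverse, List.zipWith_map, List.zipWith_self]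
  simp

lemma toGrandDyck_injective : Function.Injective toGrandDyck :=
  Function.LeftInverse.injective ofGrandDyck_toGrandDyck

lemma toGrandDyck_ofGrandDyck {w : List Bool} {n : ℕ} (hw : w.length = 2 * n) :
    toGrandDyck (ofGrandDyck w) = w := by
  have hhalf : w.length / 2 = n := by omega
  have hlen : (w.take n).length = (w.drop n).reverse.length := by simp; omega
  have hfront : front ∘ Function.uncurry ofSteps = Prod.fst :=
    funext fun p => front_ofSteps p.1 p.2
  have hback : back ∘ Function.uncurry ofSteps = Prod.snd :=
    funext fun p => back_ofSteps p.1 p.2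
  rw [ofGrandDyck, hhalf, toGrandDyck, ← List.map_uncurry_zip_eq_zipWith, List.map_map,
    List.map_map, hfront, hback, List.map_fst_zip hlen.le, List.map_snd_zip hlen.ge,
    List.reverse_reverse, List.take_append_drop]

lemma ht_toGrandDyck_of_le {m : List BStep} {j : ℕ} (hj : j ≤ m.length) :
    ht (toGrandDyck m) j = ht (m.map front) j :=
  ht_append_of_le (by simpa using hj)

lemma ht_toGrandDyck_two_mul_sub {m : List BStep} {j : ℕ} (hj : j ≤ m.length) :
    ht (toGrandDyck m) (2 * m.length - j) = 2 * motzkinHt m m.length - ht (m.map back) j := by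
  have hidx : 2 * m.length - j = (m.map front).length + ((m.map back).length - j) := by
    simp only [List.length_map]; omega
  have htotal := ht_map_front_add_ht_map_back m m.length
  rw [toGrandDyck, hidx, ht_append_reverse _ _ (by simpa using hj)]
  simp only [List.length_map] at htotal ⊢
  omega

lemma isGrandDyck_toGrandDyck_iff {n : ℕ} {m : List BStep} :
    IsGrandDyck n (toGrandDyck m) ↔ IsBicoloredGrandMotzkin m ∧ m.length = n := by
  have hlength : ht (toGrandDyck m) (toGrandDyck m).length = 2 * motzkinHt m m.length := by
    simpa [length_toGrandDyck, ht] using ht_toGrandDyck_two_mul_sub (m := m) (Nat.zero_le _)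
  rw [isGrandDyck_iff, hlength, length_toGrandDyck, isBicoloredGrandMotzkin_iff]
  omega

lemma ht_toGrandDyck_eq_iff {m : List BStep} (hm : IsBicoloredGrandMotzkin m) {j : ℕ}
    (hj : j ≤ m.length) :
    ht (toGrandDyck m) j = ht (toGrandDyck m) (2 * m.length - j) ↔ motzkinHt m j = 0 := by
  rw [ht_toGrandDyck_of_le hj, ht_toGrandDyck_two_mul_sub hj, isBicoloredGrandMotzkin_iff.1 hm]
  have := ht_map_front_add_ht_map_back m j
  omega

lemma card_filter_Icc_one (n : ℕ) (p : ℕ → Prop) [DecidablePred p] :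
    ((Finset.Icc 1 n).filter p).card = ((Finset.range n).filter fun j => p (j + 1)).card := by
  refine Finset.card_nbij' (· - 1) (· + 1) ?_ ?_ ?_ ?_ <;> intro i hi <;>
    simp only [Finset.coe_filter, Finset.mem_Icc, Finset.mem_range, Set.mem_ofPred_eq] at hi ⊢
  · obtain ⟨⟨hi1, hin⟩, hp⟩ := hi
    rw [Nat.sub_add_cancel hi1]
    exact ⟨by omega, hp⟩
  · exact ⟨by omega, hi.2⟩
  · omega
  · omega

lemma dsGD_toGrandDyck_eq_card {m : List BStep} (hm : IsBicoloredGrandMotzkin m) :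
    dsGD m.length (toGrandDyck m) =
      ((Finset.range m.length).filter fun j =>
        motzkinHt m j = 0 ∧ motzkinHt m (j + 1) = 0).card := by
  rw [dsGD, card_filter_Icc_one]
  congr 1
  refine Finset.filter_congr fun j hj => ?_
  rw [Finset.mem_range] at hj
  rw [Nat.add_sub_cancel, show 2 * m.length + 1 - (j + 1) = 2 * m.length - j by omega,
    ht_toGrandDyck_eq_iff hm hj.le, ht_toGrandDyck_eq_iff hm hj]

lemma h1zero_add_h2zero (m : List BStep) :
    h1zero m + h2zero m =
      ((Finset.range m.length).filter fun j =>
        motzkinHt m j = 0 ∧ motzkinHt m (j + 1) = 0).card := by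
  rw [h1zero, h2zero, ← Finset.card_union_of_disjoint, ← Finset.filter_or]
  · congr 1
    refine Finset.filter_congr fun j hj => ?_
    rw [Finset.mem_range] at hj
    rw [motzkinHt_succ hj, ← motzkinHt_eq_zero_iff]
    cases m.getD j U <;> simp [level] <;> omega
  · exact Finset.disjoint_filter.2 fun j _ h1 h2 => by rw [h1.1] at h2; cases h2.1

lemma dsGD_toGrandDyck {m : List BStep} (hm : IsBicoloredGrandMotzkin m) :
    dsGD m.length (toGrandDyck m) = h1zero m + h2zero m := by
  rw [dsGD_toGrandDyck_eq_card hm, h1zero_add_h2zero]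

/-- The number of grand Dyck paths of semilength `n` with degree of symmetry `k` equals the
number of bicolored grand Motzkin paths of length `n` with `h1⁰ + h2⁰ = k`. -/
theorem grandDyck_ds_eq_bicoloredGrandMotzkin (n k : ℕ) :
    {w : List Bool | IsGrandDyck n w ∧ dsGD n w = k}.ncard
      = {m : List BStep | IsBicoloredGrandMotzkin m ∧ m.length = n
          ∧ h1zero m + h2zero m = k}.ncard := by
  suffices {w : List Bool | IsGrandDyck n w ∧ dsGD n w = k} = toGrandDyck '' {m : List BStep |
      IsBicoloredGrandMotzkin m ∧ m.length = n ∧ h1zero m + h2zero m = k} by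
    rw [this, Set.ncard_image_of_injective _ toGrandDyck_injective]
  ext w
  constructor
  · rintro ⟨hw, rfl⟩
    obtain ⟨m, rfl⟩ : ∃ m, toGrandDyck m = w := ⟨ofGrandDyck w, toGrandDyck_ofGrandDyck hw.1⟩
    obtain ⟨hm, rfl⟩ := isGrandDyck_toGrandDyck_iff.1 hw
    exact ⟨m, ⟨hm, rfl, (dsGD_toGrandDyck hm).symm⟩, rfl⟩
  · rintro ⟨m, ⟨hm, rfl, rfl⟩, rfl⟩
    exact ⟨isGrandDyck_toGrandDyck_iff.2 ⟨hm, rfl⟩, dsGD_toGrandDyck hm⟩
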